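/- arXiv:1807.00321 — 3 statements merged into one kernel-verified Lean document; each statement's English description precedes it below -/
import Mathlib

section
/- Let K ⊆ ℝⁿ be a nonempty closed convex set and P : ℝⁿ → ℝⁿ a polynomial map of degree d with leading homogeneous part P^∞. If Sol(K^∞, P^∞) = {0}, then for every bounded set O of polynomial maps of degree at most d−1, the union ∪_{Q∈O} Sol(K, P+Q) is a bounded subset of ℝⁿ. -/
open scoped RealInnerProductSpace
open MvPolynomial Bornology

/-- Solution set of the variational inequality VI(K,F). -/
def Sol {n : ℕ} (K : Set (EuclideanSpace ℝ (Fin n)))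
    (F : EuclideanSpace ℝ (Fin n) → EuclideanSpace ℝ (Fin n)) :
    Set (EuclideanSpace ℝ (Fin n)) :=
  {x | x ∈ K ∧ ∀ y ∈ K, 0 ≤ ⟪F x, y - x⟫}

/-- Dual cone of a set. -/
def dualCone {n : ℕ} (C : Set (EuclideanSpace ℝ (Fin n))) :
    Set (EuclideanSpace ℝ (Fin n)) :=
  {q | ∀ v ∈ C, 0 ≤ ⟪q, v⟫}

/-- Recession (asymptotic) cone of a closed convex set. -/
def recessionCone {n : ℕ} (K : Set (EuclideanSpace ℝ (Fin n))) :
    Set (EuclideanSpace ℝ (Fin n)) :=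
  {v | ∀ x ∈ K, ∀ t : ℝ, 0 ≤ t → x + t • v ∈ K}

/-- Evaluation of a vector of polynomials as a map ℝⁿ → ℝⁿ. -/
noncomputable def evalMap {n : ℕ} (Q : Fin n → MvPolynomial (Fin n) ℝ)
    (x : EuclideanSpace ℝ (Fin n)) : EuclideanSpace ℝ (Fin n) :=
  WithLp.toLp 2 (fun i => MvPolynomial.eval (fun j => x j) (Q i))

/-- Leading term: the degree-`d` homogeneous component of each coordinate. -/
noncomputable def leadTerm {n : ℕ} (d : ℕ) (P : Fin n → MvPolynomial (Fin n) ℝ) :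
    Fin n → MvPolynomial (Fin n) ℝ :=
  fun i => MvPolynomial.homogeneousComponent d (P i)

/-- Frobenius norm of the coefficients of a polynomial map. -/
noncomputable def pnorm {n : ℕ} (Q : Fin n → MvPolynomial (Fin n) ℝ) : ℝ :=
  Real.sqrt (∑ i, ∑ m ∈ (Q i).support, ((Q i).coeff m) ^ 2)

/-! ### Auxiliary lemmas -/

lemma eval_homog_mul {n m : ℕ} {φ : MvPolynomial (Fin n) ℝ} (h : φ.IsHomogeneous m)
    (r : ℝ) (x : Fin n → ℝ) :
    MvPolynomial.eval (fun j => r * x j) φ = r ^ m * MvPolynomial.eval x φ := by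
  rw [MvPolynomial.eval_eq', MvPolynomial.eval_eq', Finset.mul_sum]
  apply Finset.sum_congr rfl
  intro dd hdd
  have hdeg : ∑ j, dd j = m := by
    have h1 := h (MvPolynomial.mem_support_iff.mp hdd)
    change (Finsupp.weight (fun _ => 1)) dd = m at h1
    rw [← Finsupp.degree_eq_weight_one] at h1
    rw [← h1, Finsupp.degree]
    exact (Finset.sum_subset (Finset.subset_univ _) (by
      intro i _ hi
      simpa using Finsupp.notMem_support_iff.mp hi)).symm
  calc MvPolynomial.coeff dd φ * ∏ j, (r * x j) ^ dd j
      = MvPolynomial.coeff dd φ * ((∏ j, r ^ dd j) * ∏ j, x j ^ dd j) := by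
        rw [← Finset.prod_mul_distrib]; simp [mul_pow]
    _ = r ^ m * (MvPolynomial.coeff dd φ * ∏ j, x j ^ dd j) := by
        rw [Finset.prod_pow_eq_pow_sum, hdeg]; ring

lemma pnorm_nonneg {n : ℕ} (Q : Fin n → MvPolynomial (Fin n) ℝ) : 0 ≤ pnorm Q :=
  Real.sqrt_nonneg _

lemma abs_coeff_le_pnorm {n : ℕ} (Q : Fin n → MvPolynomial (Fin n) ℝ)
    (i : Fin n) (m : Fin n →₀ ℕ) : |(Q i).coeff m| ≤ pnorm Q := by
  by_cases hm : m ∈ (Q i).support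
  · have h1 : ((Q i).coeff m) ^ 2 ≤ ∑ m ∈ (Q i).support, ((Q i).coeff m) ^ 2 :=
      Finset.single_le_sum (f := fun m => ((Q i).coeff m) ^ 2) (fun a _ => sq_nonneg _) hm
    have h2 : ∑ m ∈ (Q i).support, ((Q i).coeff m) ^ 2
        ≤ ∑ i, ∑ m ∈ (Q i).support, ((Q i).coeff m) ^ 2 :=
      Finset.single_le_sum (f := fun i => ∑ m ∈ (Q i).support, ((Q i).coeff m) ^ 2)
        (fun a _ => Finset.sum_nonneg fun _ _ => sq_nonneg _)
        (Finset.mem_univ i)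
    have := Real.sqrt_le_sqrt (h1.trans h2)
    rwa [Real.sqrt_sq_eq_abs] at this
  · simp only [MvPolynomial.notMem_support_iff.mp hm, abs_zero]
    exact pnorm_nonneg Q

lemma eval_bound {n D : ℕ} {c : ℝ} {Q : Fin n → MvPolynomial (Fin n) ℝ}
    (hdeg : ∀ i, (Q i).totalDegree ≤ D) (hc : pnorm Q ≤ c)
    (i : Fin n) {x : Fin n → ℝ} {B : ℝ} (hB1 : 1 ≤ B) (hBx : ∀ j, |x j| ≤ B) :
    |MvPolynomial.eval x (Q i)| ≤ (((Finset.range (D+1)).biUnion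
      (fun e => Finset.finsuppAntidiag (Finset.univ : Finset (Fin n)) e)).card : ℝ)
      * (c * B ^ D) := by
  have hc0 : 0 ≤ c := (pnorm_nonneg Q).trans hc
  have hB0 : 0 ≤ B := zero_le_one.trans hB1
  set T := (Finset.range (D+1)).biUnion
      (fun e => Finset.finsuppAntidiag (Finset.univ : Finset (Fin n)) e) with hT
  have hsub : (Q i).support ⊆ T := by
    intro dd hdd
    rw [hT]
    apply Finset.mem_biUnion.mpr
    refine ⟨(Finset.univ.sum dd), ?_, ?_⟩
    · rw [Finset.mem_range, Nat.lt_succ_iff]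
      refine le_trans ?_ ((MvPolynomial.le_totalDegree hdd).trans (hdeg i))
      rw [Finsupp.sum]
      exact le_of_eq (Finset.sum_subset (Finset.subset_univ _) (by
        intro j _ hj; simpa using Finsupp.notMem_support_iff.mp hj)).symm
    · exact Finset.mem_finsuppAntidiag.mpr ⟨rfl, Finset.subset_univ _⟩
  have hterm : ∀ dd ∈ (Q i).support,
      |(Q i).coeff dd * ∏ j, x j ^ dd j| ≤ c * B ^ D := by
    intro dd hdd
    rw [abs_mul]
    have h1 : |(Q i).coeff dd| ≤ c := (abs_coeff_le_pnorm Q i dd).trans hc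
    have h2 : |∏ j, x j ^ dd j| ≤ B ^ D := by
      rw [Finset.abs_prod]
      have : ∀ j ∈ Finset.univ, |x j ^ dd j| ≤ B ^ dd j := by
        intro j _
        rw [abs_pow]
        exact pow_le_pow_left₀ (abs_nonneg _) (hBx j) _
      calc ∏ j, |x j ^ dd j| ≤ ∏ j, B ^ dd j :=
            Finset.prod_le_prod (fun j _ => abs_nonneg _) this
        _ = B ^ (∑ j, dd j) := Finset.prod_pow_eq_pow_sum _ _ _
        _ ≤ B ^ D := by
            apply pow_le_pow_right₀ hB1
            refine le_trans ?_ ((MvPolynomial.le_totalDegree hdd).trans (hdeg i))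
            rw [Finsupp.sum]
            exact le_of_eq (Finset.sum_subset (Finset.subset_univ _) (by
              intro j _ hj; simpa using Finsupp.notMem_support_iff.mp hj)).symm
    exact mul_le_mul h1 h2 (abs_nonneg _) hc0
  calc |MvPolynomial.eval x (Q i)|
      = |∑ dd ∈ (Q i).support, (Q i).coeff dd * ∏ j, x j ^ dd j| := by
        rw [MvPolynomial.eval_eq']
    _ ≤ ∑ dd ∈ (Q i).support, |(Q i).coeff dd * ∏ j, x j ^ dd j| :=
        Finset.abs_sum_le_sum_abs _ _
    _ ≤ ∑ dd ∈ (Q i).support, (c * B ^ D) := Finset.sum_le_sum hterm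
    _ = ((Q i).support.card : ℝ) * (c * B ^ D) := by rw [Finset.sum_const, nsmul_eq_mul]
    _ ≤ (T.card : ℝ) * (c * B ^ D) := by
        apply mul_le_mul_of_nonneg_right _ (mul_nonneg hc0 (pow_nonneg hB0 _))
        exact_mod_cast Finset.card_le_card hsub

lemma abs_coord_le_norm {n : ℕ} (x : EuclideanSpace ℝ (Fin n)) (j : Fin n) : |x j| ≤ ‖x‖ := by
  rw [EuclideanSpace.norm_eq, ← Real.sqrt_sq_eq_abs]
  apply Real.sqrt_le_sqrt
  calc (x j) ^ 2 = ‖x j‖ ^ 2 := by rw [Real.norm_eq_abs, sq_abs]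
    _ ≤ ∑ i, ‖x i‖ ^ 2 := Finset.single_le_sum (f := fun i => ‖x i‖ ^ 2)
        (fun i _ => sq_nonneg _) (Finset.mem_univ j)

lemma eval_coord_continuous {n : ℕ} (p : MvPolynomial (Fin n) ℝ) :
    Continuous (fun x : EuclideanSpace ℝ (Fin n) => MvPolynomial.eval (fun j => x j) p) := by
  have h1 : Continuous (fun x : EuclideanSpace ℝ (Fin n) => (fun j => x j : Fin n → ℝ)) :=
    continuous_pi fun j => PiLp.continuous_apply 2 _ j
  have h2 : Continuous (fun y : Fin n → ℝ => MvPolynomial.eval y p) :=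
    MvPolynomial.continuous_eval p
  exact h2.comp h1

theorem stmt4 {n : ℕ} (K : Set (EuclideanSpace ℝ (Fin n)))
    (hK : K.Nonempty) (hKc : IsClosed K) (hKconv : Convex ℝ K)
    (d : ℕ) (hd : 0 < d)
    (P : Fin n → MvPolynomial (Fin n) ℝ)
    (hPdeg : ∀ i, (P i).totalDegree ≤ d) (hPd : ∃ i, (P i).totalDegree = d)
    (hR0 : Sol (recessionCone K) (evalMap (leadTerm d P)) = {0})
    (O : Set (Fin n → MvPolynomial (Fin n) ℝ))
    (hOdeg : ∀ Q ∈ O, ∀ i, (Q i).totalDegree ≤ d - 1)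
    (hObd : ∃ c : ℝ, ∀ Q ∈ O, pnorm Q ≤ c) :
    IsBounded (⋃ Q ∈ O, Sol K (evalMap (P + Q))) := by
  classical
  obtain ⟨c, hc⟩ := hObd
  obtain ⟨x0, hx0⟩ := hK
  by_contra hbd
  rw [isBounded_iff_forall_norm_le] at hbd
  push_neg at hbd
  have hseq : ∀ k : ℕ, ∃ Zx : (Fin n → MvPolynomial (Fin n) ℝ) × EuclideanSpace ℝ (Fin n),
      Zx.1 ∈ O ∧ Zx.2 ∈ Sol K (evalMap (P + Zx.1)) ∧ (k : ℝ) < ‖Zx.2‖ := by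
    intro k
    obtain ⟨x, hx, hnx⟩ := hbd k
    simp only [Set.mem_iUnion] at hx
    obtain ⟨Q, hQ, hxQ⟩ := hx
    exact ⟨(Q, x), hQ, hxQ, hnx⟩
  choose Z hZO hZsol hZnorm using hseq
  set xk : ℕ → EuclideanSpace ℝ (Fin n) := fun k => (Z k).2 with hxk
  have hx0pos : ∀ k, 0 < ‖xk k‖ := fun k =>
    lt_of_le_of_lt (Nat.cast_nonneg k) (hZnorm k)
  set u : ℕ → EuclideanSpace ℝ (Fin n) := fun k => ‖xk k‖⁻¹ • xk k with hu
  have husph : ∀ k, u k ∈ Metric.sphere (0 : EuclideanSpace ℝ (Fin n)) 1 := by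
    intro k
    rw [mem_sphere_zero_iff_norm, hu, norm_smul, norm_inv, norm_norm]
    exact inv_mul_cancel₀ (ne_of_gt (hx0pos k))
  obtain ⟨v, hvmem, φ, hφmono, hUconv⟩ := (isCompact_sphere
    (0 : EuclideanSpace ℝ (Fin n)) 1).tendsto_subseq husph
  have hvnorm : ‖v‖ = 1 := mem_sphere_zero_iff_norm.mp hvmem
  -- Notation along the subsequence
  set X : ℕ → EuclideanSpace ℝ (Fin n) := fun k => xk (φ k) with hX
  set U : ℕ → EuclideanSpace ℝ (Fin n) := fun k => u (φ k) with hUdef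
  set QQ : ℕ → (Fin n → MvPolynomial (Fin n) ℝ) := fun k => (Z (φ k)).1 with hQQ
  have hXpos : ∀ k, 0 < ‖X k‖ := fun k => hx0pos (φ k)
  have hXne : ∀ k, ‖X k‖ ≠ 0 := fun k => ne_of_gt (hXpos k)
  have hXK : ∀ k, X k ∈ K := fun k => (hZsol (φ k)).1
  have hVI : ∀ k, ∀ y ∈ K, 0 ≤ ⟪evalMap (P + QQ k) (X k), y - X k⟫ :=
    fun k => (hZsol (φ k)).2
  have hUX : ∀ k, U k = ‖X k‖⁻¹ • X k := fun k => rfl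
  have hXlow : ∀ k : ℕ, (k : ℝ) ≤ ‖X k‖ := by
    intro k
    refine le_trans ?_ (le_of_lt (hZnorm (φ k)))
    exact_mod_cast hφmono.le_apply
  have hXtop : Filter.Tendsto (fun k => ‖X k‖) Filter.atTop Filter.atTop :=
    Filter.tendsto_atTop_mono hXlow tendsto_natCast_atTop_atTop
  have hinv : Filter.Tendsto (fun k => ‖X k‖⁻¹) Filter.atTop (nhds 0) :=
    hXtop.inv_tendsto_atTop
  have hU : Filter.Tendsto U Filter.atTop (nhds v) := hUconv
  -- Step A : v is in the recession cone
  have hvrec : v ∈ recessionCone K := by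
    intro z hz t ht
    have hlim : Filter.Tendsto (fun k => (1 - t * ‖X k‖⁻¹) • z + t • U k)
        Filter.atTop (nhds (z + t • v)) := by
      have h1 : Filter.Tendsto (fun k => (1 - t * ‖X k‖⁻¹)) Filter.atTop (nhds 1) := by
        have hc1 : Filter.Tendsto (fun _ : ℕ => (1:ℝ)) Filter.atTop (nhds 1) :=
          tendsto_const_nhds
        have := hc1.sub (hinv.const_mul t)
        simpa using this
      have := (h1.smul_const z).add (hU.const_smul t)
      simpa using this
    apply hKc.mem_of_tendsto hlim
    filter_upwards [hXtop.eventually_ge_atTop t] with k hk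
    have hl0 : 0 ≤ t * ‖X k‖⁻¹ := mul_nonneg ht (inv_nonneg.mpr (norm_nonneg _))
    have hl1 : t * ‖X k‖⁻¹ ≤ 1 := by
      have h2 : t / ‖X k‖ ≤ 1 := (div_le_one (hXpos k)).mpr hk
      rwa [div_eq_mul_inv] at h2
    have hmem := hKconv hz (hXK k) (a := 1 - t * ‖X k‖⁻¹) (b := t * ‖X k‖⁻¹)
      (by linarith) hl0 (by ring)
    have heq : (t * ‖X k‖⁻¹) • X k = t • U k := by
      rw [hUX k, smul_smul]
    rw [← heq]
    exact hmem
  -- the finite monomial bound constant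
  set N : ℝ := (((Finset.range (d - 1 + 1)).biUnion
      (fun e => Finset.finsuppAntidiag (Finset.univ : Finset (Fin n)) e)).card : ℝ) with hN
  -- Step B : the normalized maps converge
  set A : ℕ → EuclideanSpace ℝ (Fin n) :=
    fun k => (‖X k‖ ^ d)⁻¹ • evalMap (P + QQ k) (X k) with hA
  set L : EuclideanSpace ℝ (Fin n) := evalMap (leadTerm d P) v with hL
  have hPsum : ∀ i, ∑ e ∈ Finset.range (d+1), homogeneousComponent e (P i) = P i := by
    intro i
    calc ∑ e ∈ Finset.range (d+1), homogeneousComponent e (P i)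
        = ∑ e ∈ Finset.range ((P i).totalDegree + 1), homogeneousComponent e (P i) := by
          symm
          apply Finset.sum_subset (Finset.range_subset_range.mpr (by have := hPdeg i; omega))
          intro e _ he
          simp only [Finset.mem_range, not_lt] at he
          have hlt : (P i).totalDegree < e := by omega
          exact homogeneousComponent_eq_zero _ _ hlt
      _ = P i := sum_homogeneousComponent (P i)
  have hAconv : Filter.Tendsto A Filter.atTop (nhds L) := by
    rw [(PiLp.homeomorph 2 _).isInducing.tendsto_nhds_iff, tendsto_pi_nhds]
    intro i
    have hcoord : ∀ k, A k i = (‖X k‖ ^ d)⁻¹ * MvPolynomial.eval (fun j => X k j) (P i)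
        + (‖X k‖ ^ d)⁻¹ * MvPolynomial.eval (fun j => X k j) (QQ k i) := by
      intro k
      simp only [hA, PiLp.smul_apply, evalMap, Pi.add_apply, map_add, smul_eq_mul]
      ring
    have hLcoord : L i = MvPolynomial.eval (fun j => v j) (homogeneousComponent d (P i)) := rfl
    change Filter.Tendsto (fun k => A k i) Filter.atTop (nhds (L i))
    simp only [hcoord, hLcoord]
    have hfrac : ∀ k, ∀ e, e ≤ d → (‖X k‖ ^ d)⁻¹ * ‖X k‖ ^ e = (‖X k‖⁻¹) ^ (d - e) := by
      intro k e he
      have h0 := hXne k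
      rw [inv_pow, pow_sub₀ _ h0 he, mul_inv, inv_inv]
    have hXU : ∀ k, (fun j => X k j) = (fun j => ‖X k‖ * U k j) := by
      intro k
      funext j
      rw [hUX k, PiLp.smul_apply, smul_eq_mul, ← mul_assoc,
        mul_inv_cancel₀ (hXne k), one_mul]
    have hpart1 : Filter.Tendsto
        (fun k => (‖X k‖ ^ d)⁻¹ * MvPolynomial.eval (fun j => X k j) (P i))
        Filter.atTop (nhds (MvPolynomial.eval (fun j => v j) (homogeneousComponent d (P i)))) := by
      have h1 : ∀ k, MvPolynomial.eval (fun j => X k j) (P i)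
          = ∑ e ∈ Finset.range (d+1),
              MvPolynomial.eval (fun j => X k j) (homogeneousComponent e (P i)) := by
        intro k
        conv_lhs => rw [← hPsum i, map_sum]
      have hexp : ∀ k, (‖X k‖ ^ d)⁻¹ * MvPolynomial.eval (fun j => X k j) (P i)
          = ∑ e ∈ Finset.range (d+1), (‖X k‖⁻¹) ^ (d - e) *
              MvPolynomial.eval (fun j => U k j) (homogeneousComponent e (P i)) := by
        intro k
        rw [h1 k, Finset.mul_sum]
        apply Finset.sum_congr rfl
        intro e he
        rw [Finset.mem_range, Nat.lt_succ_iff] at he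
        rw [hXU k, eval_homog_mul (homogeneousComponent_isHomogeneous e (P i)),
          ← mul_assoc, hfrac k e he]
      have hsumval : ∑ e ∈ Finset.range (d+1), (0:ℝ) ^ (d - e) *
          MvPolynomial.eval (fun j => v j) (homogeneousComponent e (P i))
          = MvPolynomial.eval (fun j => v j) (homogeneousComponent d (P i)) := by
        rw [Finset.sum_eq_single_of_mem d (Finset.self_mem_range_succ d)]
        · simp
        · intro e he hne
          rw [Finset.mem_range, Nat.lt_succ_iff] at he
          rw [zero_pow (by omega), zero_mul]
      simp only [hexp]
      rw [← hsumval]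
      apply tendsto_finset_sum
      intro e _
      exact (hinv.pow (d - e)).mul
        (((eval_coord_continuous (homogeneousComponent e (P i))).tendsto v).comp hU)
    have hpart2 : Filter.Tendsto
        (fun k => (‖X k‖ ^ d)⁻¹ * MvPolynomial.eval (fun j => X k j) (QQ k i))
        Filter.atTop (nhds 0) := by
      apply squeeze_zero_norm' (a := fun k => (N * c) * ‖X k‖⁻¹)
      · filter_upwards [hXtop.eventually_ge_atTop 1] with k hk
        have hb := eval_bound (c := c) (Q := QQ k) (hOdeg _ (hZO (φ k)))
          (hc _ (hZO (φ k))) i (x := fun j => X k j) (B := ‖X k‖) hk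
          (fun j => abs_coord_le_norm (X k) j)
        rw [Real.norm_eq_abs, abs_mul, abs_inv, abs_pow, abs_norm]
        calc (‖X k‖ ^ d)⁻¹ * |MvPolynomial.eval (fun j => X k j) (QQ k i)|
            ≤ (‖X k‖ ^ d)⁻¹ * (N * (c * ‖X k‖ ^ (d-1))) := by
              apply mul_le_mul_of_nonneg_left hb
                (inv_nonneg.mpr (pow_nonneg (norm_nonneg _) _))
          _ = (N * c) * ((‖X k‖ ^ d)⁻¹ * ‖X k‖ ^ (d-1)) := by ring
          _ = (N * c) * ‖X k‖⁻¹ := by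
              congr 1
              rw [hfrac k (d-1) (by omega)]
              have h1 : d - (d - 1) = 1 := by omega
              rw [h1, pow_one]
      · simpa using hinv.const_mul (N * c)
    have := hpart1.add hpart2
    simpa using this
  -- Step C : conclude v solves the recession VI
  have hvsol : v ∈ Sol (recessionCone K) (evalMap (leadTerm d P)) := by
    refine ⟨hvrec, ?_⟩
    intro y hy
    set W : ℕ → EuclideanSpace ℝ (Fin n) :=
      fun k => ‖X k‖⁻¹ • ((x0 + ‖X k‖ • y) - X k) with hW
    have hWeq : ∀ k, W k = ‖X k‖⁻¹ • x0 + y - U k := by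
      intro k
      rw [hW, hUX k]
      simp only [smul_sub, smul_add, smul_smul, inv_mul_cancel₀ (hXne k), one_smul]
    have hWconv : Filter.Tendsto W Filter.atTop (nhds (y - v)) := by
      have h2 : Filter.Tendsto (fun k => ‖X k‖⁻¹ • x0 + y - U k)
          Filter.atTop (nhds (y - v)) := by
        have hcy : Filter.Tendsto (fun _ : ℕ => y) Filter.atTop (nhds y) :=
          tendsto_const_nhds
        have := ((hinv.smul_const x0).add hcy).sub hU
        simpa using this
      exact h2.congr (fun k => (hWeq k).symm)
    have hZK : ∀ k, x0 + ‖X k‖ • y ∈ K := fun k => hy x0 hx0 _ (norm_nonneg _)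
    have hpos : ∀ k, 0 ≤ ⟪A k, W k⟫ := by
      intro k
      rw [hA, hW, real_inner_smul_left, real_inner_smul_right]
      exact mul_nonneg (inv_nonneg.mpr (pow_nonneg (norm_nonneg _) _))
        (mul_nonneg (inv_nonneg.mpr (norm_nonneg _)) (hVI k _ (hZK k)))
    have hlim : Filter.Tendsto (fun k => ⟪A k, W k⟫) Filter.atTop (nhds ⟪L, y - v⟫) :=
      hAconv.inner hWconv
    exact ge_of_tendsto' hlim hpos
  rw [hR0] at hvsol
  rw [Set.mem_singleton_iff] at hvsol
  rw [hvsol, norm_zero] at hvnorm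
  exact one_ne_zero hvnorm.symm
end

section
/- Let K ⊆ ℝⁿ be a nonempty closed convex cone and P a polynomial map of degree d. If for every polynomial map Q of degree at most d−1 the set Sol(K, P+Q) is bounded, then Sol(K, P^∞) = {0}. -/
open scoped RealInnerProductSpace
open MvPolynomial Bornology

lemma eval_homog_aux {σ : Type*} {p : MvPolynomial σ ℝ} {d : ℕ} (hp : p.IsHomogeneous d)
    (c : ℝ) (x : σ → ℝ) : eval (fun j => c * x j) p = c ^ d * eval x p := by
  conv_lhs => rw [p.as_sum]
  conv_rhs => rw [p.as_sum]
  rw [map_sum, map_sum, Finset.mul_sum]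
  refine Finset.sum_congr rfl fun m hm => ?_
  have hdeg : m.degree = d := by
    by_contra h
    exact (mem_support_iff.mp hm) (hp.coeff_eq_zero h)
  rw [eval_monomial, eval_monomial, Finsupp.prod, Finsupp.prod]
  simp only [mul_pow, Finset.prod_mul_distrib, Finset.prod_pow_eq_pow_sum]
  rw [← hdeg]
  rw [show m.degree = ∑ i ∈ m.support, m i from rfl]
  ring

theorem stmt5 {n : ℕ} (K : Set (EuclideanSpace ℝ (Fin n)))
    (hK : K.Nonempty) (hKc : IsClosed K) (hKconv : Convex ℝ K)
    (hKcone : ∀ t : ℝ, 0 < t → ∀ x ∈ K, t • x ∈ K)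
    (d : ℕ) (hd : 0 < d)
    (P : Fin n → MvPolynomial (Fin n) ℝ)
    (hPdeg : ∀ i, (P i).totalDegree ≤ d) (hPd : ∃ i, (P i).totalDegree = d)
    (hbd : ∀ Q : Fin n → MvPolynomial (Fin n) ℝ,
      (∀ i, (Q i).totalDegree ≤ d - 1) → IsBounded (Sol K (evalMap (P + Q)))) :
    Sol K (evalMap (leadTerm d P)) = {0} := by
  -- notation
  set F : EuclideanSpace ℝ (Fin n) → EuclideanSpace ℝ (Fin n) := evalMap (leadTerm d P) with hF
  -- scaling of F
  have hscale : ∀ (t : ℝ) (x : EuclideanSpace ℝ (Fin n)),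
      F (t • x) = (t ^ d) • F x := by
    intro t x
    ext i
    have : (fun j => (t • x) j) = fun j => t * x j := by
      funext j; simp [PiLp.smul_apply, smul_eq_mul]
    show MvPolynomial.eval (fun j => (t • x) j) (leadTerm d P i)
        = ((t ^ d) • F x) i
    simp only [leadTerm]
    rw [this, eval_homog_aux (homogeneousComponent_isHomogeneous d (P i)) t (fun j => x j)]
    simp [hF, evalMap, leadTerm, PiLp.smul_apply, smul_eq_mul]
  -- 0 ∈ K
  have h0K : (0 : EuclideanSpace ℝ (Fin n)) ∈ K := by
    obtain ⟨x₀, hx₀⟩ := hK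
    have htend : Filter.Tendsto (fun k : ℕ => (1 / (k + 1) : ℝ) • x₀)
        Filter.atTop (nhds 0) := by
      have h1 : Filter.Tendsto (fun k : ℕ => (1 / (k + 1) : ℝ)) Filter.atTop (nhds 0) :=
        tendsto_one_div_add_atTop_nhds_zero_nat
      simpa using h1.smul_const x₀
    refine hKc.mem_of_tendsto htend (Filter.Eventually.of_forall fun k => ?_)
    exact hKcone _ (by positivity) _ hx₀
  -- F 0 = 0
  have hF0 : F 0 = 0 := by
    ext i
    show MvPolynomial.eval (fun j => (0 : EuclideanSpace ℝ (Fin n)) j) (leadTerm d P i)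
        = (0 : EuclideanSpace ℝ (Fin n)) i
    have h0 : (fun j : Fin n => (0 : EuclideanSpace ℝ (Fin n)) j)
        = fun j : Fin n => (0 : ℝ) * (0 : ℝ) := by funext j; simp
    simp only [leadTerm]
    rw [h0, eval_homog_aux (homogeneousComponent_isHomogeneous d (P i)) 0 (fun _ => 0)]
    simp [zero_pow hd.ne']
  ext x
  simp only [Set.mem_singleton_iff]
  constructor
  · rintro ⟨hxK, hxSol⟩
    by_contra hx0
    -- key facts: ⟪F x, x⟫ = 0 and ⟪F x, y⟫ ≥ 0 for y ∈ K
    have hFxx : ⟪F x, x⟫ = 0 := by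
      have h2 : (0:ℝ) ≤ ⟪F x, (2:ℝ) • x - x⟫ := hxSol _ (hKcone 2 two_pos x hxK)
      have hh : (0:ℝ) ≤ ⟪F x, ((1:ℝ)/2) • x - x⟫ :=
        hxSol _ (hKcone (1/2) (by norm_num) x hxK)
      have e2 : (2:ℝ) • x - x = (1:ℝ) • x := by module
      have eh : ((1:ℝ)/2) • x - x = (-(1:ℝ)/2) • x := by module
      rw [e2, real_inner_smul_right] at h2
      rw [eh, real_inner_smul_right] at hh
      nlinarith
    have hFxy : ∀ y ∈ K, (0:ℝ) ≤ ⟪F x, y⟫ := by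
      intro y hy
      have := hxSol y hy
      rw [inner_sub_right, hFxx, sub_zero] at this
      exact this
    -- choose Q so that P + Q = leadTerm d P
    set Q : Fin n → MvPolynomial (Fin n) ℝ := leadTerm d P - P with hQ
    have hQdeg : ∀ i, (Q i).totalDegree ≤ d - 1 := by
      intro i
      rw [MvPolynomial.totalDegree]
      apply Finset.sup_le
      intro m hm
      have hne := MvPolynomial.mem_support_iff.mp hm
      have hQi : Q i = MvPolynomial.homogeneousComponent d (P i) - P i := rfl
      rw [hQi, MvPolynomial.coeff_sub, coeff_homogeneousComponent] at hne
      by_cases hmd : m.degree = d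
      · simp [hmd] at hne
      · have hcP : MvPolynomial.coeff m (P i) ≠ 0 := by
          intro h; simp [hmd, h] at hne
        have h1 : (m.sum fun _ e => e) ≤ d :=
          le_trans (MvPolynomial.le_totalDegree (MvPolynomial.mem_support_iff.mpr hcP))
            (hPdeg i)
        have h2 : (m.sum fun _ e => e) = m.degree := by
          rw [Finsupp.sum]; rfl
        omega
    have hPQ : P + Q = leadTerm d P := by rw [hQ]; ring
    have hbQ := hbd Q hQdeg
    rw [hPQ] at hbQ
    obtain ⟨R, hR⟩ := isBounded_iff_forall_norm_le.mp hbQ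
    -- pick a large t
    have hxn : (0:ℝ) < ‖x‖ := norm_pos_iff.mpr hx0
    set t : ℝ := max 1 ((|R| + 1) / ‖x‖) with ht
    have ht1 : (1:ℝ) ≤ t := le_max_left _ _
    have ht0 : (0:ℝ) < t := lt_of_lt_of_le one_pos ht1
    have htx : t • x ∈ Sol K F := by
      refine ⟨hKcone t ht0 x hxK, fun y hy => ?_⟩
      rw [hscale t x, real_inner_smul_left, inner_sub_right, real_inner_smul_right, hFxx]
      have := hFxy y hy
      have hpow : (0:ℝ) ≤ t ^ d := le_of_lt (pow_pos ht0 d)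
      nlinarith
    have hnorm := hR _ htx
    rw [norm_smul, Real.norm_eq_abs, abs_of_pos ht0] at hnorm
    have h2 : (|R| + 1) / ‖x‖ ≤ t := le_max_right _ _
    have h3 : |R| + 1 ≤ t * ‖x‖ := by
      rw [div_le_iff₀ hxn] at h2; linarith
    have h4 : R ≤ |R| := le_abs_self R
    linarith
  · rintro rfl
    refine ⟨h0K, fun y hy => ?_⟩
    rw [hF0]
    simp
end

section
/- Let K ⊆ ℝⁿ be a nonempty closed convex set. The set R₀(K,d) of polynomial maps Q of degree d satisfying Sol(K^∞, Q^∞) = {0} is an open subset of the space P_d of polynomial maps of degree at most d (with the coefficient norm). Equivalently, the complement {Q ∈ P_d : Sol(K^∞, Q^∞) is nontrivial or Q has degree < d with nontrivial leading solutions} is closed. -/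
open scoped RealInnerProductSpace
open MvPolynomial Bornology

/-! ### Auxiliary lemmas -/

lemma recessionCone_isClosed {n : ℕ} {K : Set (EuclideanSpace ℝ (Fin n))}
    (hKc : IsClosed K) : IsClosed (recessionCone K) := by
  have h : recessionCone K = ⋂ x ∈ K, ⋂ t ∈ Set.Ici (0:ℝ), (fun v => x + t • v) ⁻¹' K := by
    ext v; simp [recessionCone]
  rw [h]
  exact isClosed_biInter fun x hx => isClosed_biInter fun t ht =>
    hKc.preimage (continuous_const.add (continuous_id.const_smul t))

lemma zero_mem_recessionCone {n : ℕ} {K : Set (EuclideanSpace ℝ (Fin n))} :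
    0 ∈ recessionCone K := fun x hx t ht => by simpa using hx

lemma smul_mem_recessionCone {n : ℕ} {K : Set (EuclideanSpace ℝ (Fin n))}
    {v : EuclideanSpace ℝ (Fin n)} (hv : v ∈ recessionCone K) {c : ℝ} (hc : 0 ≤ c) :
    c • v ∈ recessionCone K := fun x hx t ht => by
  simpa [mul_smul] using hv x hx (t * c) (mul_nonneg ht hc)

lemma continuous_evalMap {n : ℕ} (Q : Fin n → MvPolynomial (Fin n) ℝ) :
    Continuous (evalMap Q) :=
  (EuclideanSpace.equiv (Fin n) ℝ).symm.continuous.comp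
    ((continuous_pi fun i => (Q i).continuous_eval).comp
      (EuclideanSpace.equiv (Fin n) ℝ).continuous)

lemma coord_le_norm {n : ℕ} (v : EuclideanSpace ℝ (Fin n)) (j : Fin n) : |v j| ≤ ‖v‖ := by
  rw [EuclideanSpace.norm_eq]
  calc |v j| = Real.sqrt (‖v j‖ ^ 2) := by
        rw [Real.norm_eq_abs, Real.sqrt_sq_eq_abs, abs_abs]
    _ ≤ _ := Real.sqrt_le_sqrt (Finset.single_le_sum
        (f := fun i => ‖v i‖ ^ 2) (fun i _ => sq_nonneg _) (Finset.mem_univ j))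

lemma evalMap_leadTerm_zero {n : ℕ} {d : ℕ} (hd : 0 < d) (Q : Fin n → MvPolynomial (Fin n) ℝ) :
    evalMap (leadTerm d Q) 0 = 0 := by
  ext i
  show MvPolynomial.eval (fun j => (0 : EuclideanSpace ℝ (Fin n)) j)
      (homogeneousComponent d (Q i)) = 0
  have h0 : (fun j => (0 : EuclideanSpace ℝ (Fin n)) j) = (fun _ => (0:ℝ)) := rfl
  rw [h0, eval_zero', constantCoeff_eq]
  rw [show (coeff 0 ((homogeneousComponent d) (Q i))) = _ from
    coeff_homogeneousComponent (n := d) (Q i) 0 ]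
  rw [if_neg]
  simp only [map_zero]
  omega

lemma evalMap_leadTerm_smul {n : ℕ} (d : ℕ) (Q : Fin n → MvPolynomial (Fin n) ℝ)
    (c : ℝ) (x : EuclideanSpace ℝ (Fin n)) :
    evalMap (leadTerm d Q) (c • x) = c ^ d • evalMap (leadTerm d Q) x := by
  ext i
  show MvPolynomial.eval (fun j => (c • x) j) (homogeneousComponent d (Q i))
      = c ^ d * MvPolynomial.eval (fun j => x j) (homogeneousComponent d (Q i))
  rw [eval_eq', eval_eq', Finset.mul_sum]
  refine Finset.sum_congr rfl fun m hm => ?_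
  have hdm : m.degree = d := by
    by_contra h
    rw [MvPolynomial.mem_support_iff, coeff_homogeneousComponent, if_neg h] at hm
    exact hm rfl
  have hsum : ∑ j, m j = d := by
    rw [← hdm]
    exact (Finset.sum_subset (Finset.subset_univ _)
      fun j _ hj => Finsupp.notMem_support_iff.mp hj).symm
  have hxc : ∀ j, (c • x) j = c * x j := fun j => rfl
  simp_rw [hxc, mul_pow, Finset.prod_mul_distrib, Finset.prod_pow_eq_pow_sum, hsum]
  ring

lemma dualCone_isClosed {n : ℕ} (C : Set (EuclideanSpace ℝ (Fin n))) :
    IsClosed (dualCone C) := by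
  have h : dualCone C = ⋂ v ∈ C, {q | 0 ≤ ⟪q, v⟫} := by ext q; simp [dualCone]
  rw [h]
  exact isClosed_biInter fun v hv =>
    isClosed_le continuous_const (continuous_id.inner continuous_const)

lemma zero_mem_dualCone {n : ℕ} (C : Set (EuclideanSpace ℝ (Fin n))) :
    0 ∈ dualCone C := fun v hv => by simp

lemma evalMap_leadTerm_sub {n : ℕ} (d : ℕ) (Q P : Fin n → MvPolynomial (Fin n) ℝ)
    (x : EuclideanSpace ℝ (Fin n)) :
    evalMap (leadTerm d (Q - P)) x = evalMap (leadTerm d Q) x - evalMap (leadTerm d P) x := by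
  ext i
  show MvPolynomial.eval _ (homogeneousComponent d ((Q - P) i)) =
    (evalMap (leadTerm d Q) x - evalMap (leadTerm d P) x) i
  have h : (evalMap (leadTerm d Q) x - evalMap (leadTerm d P) x) i =
      evalMap (leadTerm d Q) x i - evalMap (leadTerm d P) x i := rfl
  rw [h, Pi.sub_apply, map_sub, map_sub]
  rfl

lemma evalMap_bound {n : ℕ} (d : ℕ) (R : Fin n → MvPolynomial (Fin n) ℝ)
    (x : EuclideanSpace ℝ (Fin n)) (hx : ∀ j, |x j| ≤ 1) :
    ‖evalMap (leadTerm d R) x‖ ≤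
      Real.sqrt ((Finset.Iic (Finsupp.equivFunOnFinite.symm (fun _ : Fin n => d))).card)
        * pnorm R := by
  set D := Finsupp.equivFunOnFinite.symm (fun _ : Fin n => d) with hD
  set M := (Finset.Iic D).card with hM
  rw [EuclideanSpace.norm_eq, pnorm, ← Real.sqrt_mul (by positivity)]
  apply Real.sqrt_le_sqrt
  rw [Finset.mul_sum]
  apply Finset.sum_le_sum
  intro i _
  set q := homogeneousComponent d (R i) with hq
  have hdeg : ∀ m ∈ q.support, m.degree = d := by
    intro m hm
    rw [MvPolynomial.mem_support_iff, hq, coeff_homogeneousComponent] at hm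
    by_contra h
    exact hm (if_neg h)
  have hco : ∀ m ∈ q.support, q.coeff m = (R i).coeff m := by
    intro m hm
    show MvPolynomial.coeff m ((homogeneousComponent d) (R i)) = _
    rw [coeff_homogeneousComponent, if_pos (hdeg m hm)]
  have hsubRi : q.support ⊆ (R i).support := fun m hm =>
    MvPolynomial.mem_support_iff.mpr (by
      rw [← hco m hm]; exact MvPolynomial.mem_support_iff.mp hm)
  have hsub : q.support ⊆ Finset.Iic D := by
    intro m hm
    rw [Finset.mem_Iic, Finsupp.le_iff]
    intro j hj
    have h1 : m j ≤ m.degree :=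
      Finset.single_le_sum (f := fun j => m j) (fun _ _ => Nat.zero_le _) hj
    have h2 : D j = d := by simp [hD]
    rw [h2]
    exact h1.trans_eq (hdeg m hm)
  have h1 : |MvPolynomial.eval (fun j => x j) q| ≤ ∑ m ∈ q.support, |q.coeff m| := by
    rw [eval_eq']
    refine (Finset.abs_sum_le_sum_abs _ _).trans (Finset.sum_le_sum fun m hm => ?_)
    rw [abs_mul]
    have h2 : |∏ j, (x j) ^ m j| ≤ 1 := by
      rw [Finset.abs_prod]
      refine Finset.prod_le_one (fun j _ => abs_nonneg _) (fun j _ => ?_)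
      rw [abs_pow]
      exact pow_le_one₀ (abs_nonneg _) (hx j)
    calc |q.coeff m| * |∏ j, (x j) ^ m j| ≤ |q.coeff m| * 1 :=
          mul_le_mul_of_nonneg_left h2 (abs_nonneg _)
      _ = |q.coeff m| := mul_one _
  have hnormeq : ‖evalMap (leadTerm d R) x i‖ ^ 2 = (MvPolynomial.eval (fun j => x j) q) ^ 2 := by
    rw [Real.norm_eq_abs, sq_abs]; rfl
  rw [hnormeq]
  calc (MvPolynomial.eval (fun j => x j) q) ^ 2
      ≤ (∑ m ∈ q.support, |q.coeff m|) ^ 2 := by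
        rw [← sq_abs]
        exact pow_le_pow_left₀ (abs_nonneg _) h1 2
    _ ≤ q.support.card * ∑ m ∈ q.support, |q.coeff m| ^ 2 := sq_sum_le_card_mul_sum_sq
    _ ≤ (M : ℝ) * ∑ m ∈ (R i).support, ((R i).coeff m) ^ 2 := by
        have e1 : ∑ m ∈ q.support, |q.coeff m| ^ 2
            = ∑ m ∈ q.support, ((R i).coeff m) ^ 2 :=
          Finset.sum_congr rfl fun m hm => by rw [sq_abs, hco m hm]
        have e2 : ∑ m ∈ q.support, ((R i).coeff m) ^ 2
            ≤ ∑ m ∈ (R i).support, ((R i).coeff m) ^ 2 :=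
          Finset.sum_le_sum_of_subset_of_nonneg hsubRi (fun _ _ _ => sq_nonneg _)
        have e3 : (q.support.card : ℝ) ≤ (M : ℝ) :=
          Nat.cast_le.mpr (Finset.card_le_card hsub)
        have e4 : (0:ℝ) ≤ ∑ m ∈ q.support, |q.coeff m| ^ 2 :=
          Finset.sum_nonneg fun _ _ => sq_nonneg _
        calc (q.support.card : ℝ) * ∑ m ∈ q.support, |q.coeff m| ^ 2
            ≤ (M : ℝ) * ∑ m ∈ q.support, |q.coeff m| ^ 2 :=
              mul_le_mul_of_nonneg_right e3 e4
          _ ≤ _ := by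
              rw [e1]
              exact mul_le_mul_of_nonneg_left e2 (Nat.cast_nonneg _)

theorem stmt6 {n : ℕ} (K : Set (EuclideanSpace ℝ (Fin n)))
    (hK : K.Nonempty) (hKc : IsClosed K) (hKconv : Convex ℝ K)
    (d : ℕ) (hd : 0 < d)
    (P : Fin n → MvPolynomial (Fin n) ℝ)
    (hPdeg : ∀ i, (P i).totalDegree ≤ d) (hPd : ∃ i, (P i).totalDegree = d)
    (hR0 : Sol (recessionCone K) (evalMap (leadTerm d P)) = {0}) :
    ∃ ε > (0 : ℝ), ∀ Q : Fin n → MvPolynomial (Fin n) ℝ,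
      (∀ i, (Q i).totalDegree ≤ d) → pnorm (Q - P) < ε →
        Sol (recessionCone K) (evalMap (leadTerm d Q)) = {0} := by
  classical
  set C := recessionCone K with hC
  set Cd := dualCone C with hCdual
  set Fp := evalMap (leadTerm d P) with hFp
  set M := (Finset.Iic (Finsupp.equivFunOnFinite.symm (fun _ : Fin n => d))).card with hM
  set g : EuclideanSpace ℝ (Fin n) → ℝ :=
    fun x => |⟪Fp x, x⟫| + Metric.infDist (Fp x) Cd with hg
  have hgcont : Continuous g :=
    (((continuous_evalMap _).inner continuous_id).abs).add
      ((Metric.continuous_infDist_pt _).comp (continuous_evalMap _))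
  set S : Set (EuclideanSpace ℝ (Fin n)) := C ∩ Metric.sphere 0 1 with hS
  have hgpos : ∀ x ∈ S, 0 < g x := by
    rintro x ⟨hxC, hxs⟩
    rw [mem_sphere_zero_iff_norm] at hxs
    rcases lt_or_ge 0 (g x) with h | h
    · exact h
    exfalso
    have habs : (0:ℝ) ≤ |⟪Fp x, x⟫| := abs_nonneg _
    have hinf : (0:ℝ) ≤ Metric.infDist (Fp x) Cd := Metric.infDist_nonneg
    have h1 : |⟪Fp x, x⟫| = 0 := by
      rw [hg] at h; simp only at h; linarith
    have h2 : Metric.infDist (Fp x) Cd = 0 := by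
      rw [hg] at h; simp only at h; linarith
    have hmem : Fp x ∈ Cd := by
      have hne : Cd.Nonempty := ⟨0, zero_mem_dualCone C⟩
      have hcl := (Metric.mem_closure_iff_infDist_zero hne).mpr h2
      rwa [(dualCone_isClosed C).closure_eq] at hcl
    have hsol : x ∈ Sol C Fp := by
      refine ⟨hxC, fun y hy => ?_⟩
      rw [inner_sub_right, abs_eq_zero.mp h1, sub_zero]
      exact hmem y hy
    rw [hR0] at hsol
    rw [Set.mem_singleton_iff.mp hsol] at hxs
    simp at hxs
  obtain ⟨δ, hδpos, hδ⟩ : ∃ δ > (0:ℝ), ∀ x ∈ S, δ ≤ g x := by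
    by_cases hSne : S.Nonempty
    · have hScomp : IsCompact S :=
        (isCompact_sphere 0 1).inter_left (recessionCone_isClosed hKc)
      obtain ⟨x0, hx0S, hx0min⟩ := hScomp.exists_isMinOn hSne hgcont.continuousOn
      exact ⟨g x0, hgpos x0 hx0S, fun x hx => hx0min hx⟩
    · exact ⟨1, one_pos, fun x hx => absurd ⟨x, hx⟩ hSne⟩
  have hsqrtM : (0:ℝ) ≤ Real.sqrt M := Real.sqrt_nonneg _
  refine ⟨δ / (2 * (Real.sqrt M + 1)), by positivity, fun Q hQdeg hpn => ?_⟩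
  set Fq := evalMap (leadTerm d Q) with hFq
  have hdiff : ∀ u : EuclideanSpace ℝ (Fin n), ‖u‖ = 1 → ‖Fq u - Fp u‖ < δ / 2 := by
    intro u hu
    have h1 : ∀ j, |u j| ≤ 1 := fun j => (coord_le_norm u j).trans hu.le
    have h2 := evalMap_bound d (Q - P) u h1
    rw [evalMap_leadTerm_sub, ← hM, ← hFq, ← hFp] at h2
    have hpn0 := pnorm_nonneg (Q - P)
    have h3 : Real.sqrt M * pnorm (Q - P) ≤ (Real.sqrt M + 1) * pnorm (Q - P) := by nlinarith
    have h4 : (Real.sqrt M + 1) * pnorm (Q - P)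
        < (Real.sqrt M + 1) * (δ / (2 * (Real.sqrt M + 1))) := by
      apply mul_lt_mul_of_pos_left hpn
      positivity
    have h5 : (Real.sqrt M + 1) * (δ / (2 * (Real.sqrt M + 1))) = δ / 2 := by
      field_simp
    linarith
  apply Set.eq_singleton_iff_unique_mem.mpr
  constructor
  · refine ⟨zero_mem_recessionCone, fun y hy => ?_⟩
    rw [hFq, evalMap_leadTerm_zero hd Q]
    simp
  · intro x hx
    by_contra hx0
    have hnx : 0 < ‖x‖ := norm_pos_iff.mpr hx0
    set c := ‖x‖⁻¹ with hc
    have hcpos : 0 < c := by positivity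
    set u := c • x with hu
    have hun : ‖u‖ = 1 := norm_smul_inv_norm hx0
    have huC : u ∈ C := smul_mem_recessionCone hx.1 hcpos.le
    have husol : ∀ y ∈ C, 0 ≤ ⟪Fq u, y - u⟫ := by
      intro y hy
      have h6 : Fq u = c ^ d • Fq x := by
        rw [hu, hFq]; exact evalMap_leadTerm_smul d Q c x
      have h7 : y - u = c • (c⁻¹ • y - x) := by
        rw [smul_sub, smul_smul, mul_inv_cancel₀ (ne_of_gt hcpos), one_smul, hu]
      rw [h6, h7, real_inner_smul_left, real_inner_smul_right]
      have h8 : c⁻¹ • y ∈ C := smul_mem_recessionCone hy (by positivity)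
      have h9 := hx.2 (c⁻¹ • y) h8
      exact mul_nonneg (pow_nonneg hcpos.le d) (mul_nonneg hcpos.le h9)
    have h9 : ⟪Fq u, u⟫ = 0 := by
      have ha := husol 0 zero_mem_recessionCone
      rw [zero_sub, inner_neg_right] at ha
      have hb := husol ((2:ℝ) • u) (smul_mem_recessionCone huC (by norm_num))
      have h2u : (2:ℝ) • u - u = u := by rw [two_smul]; abel
      rw [h2u] at hb
      linarith
    have h10 : Fq u ∈ Cd := by
      intro v hv
      have hv2 := husol v hv
      rwa [inner_sub_right, h9, sub_zero] at hv2
    have h11 : δ ≤ g u := hδ u ⟨huC, by rwa [mem_sphere_zero_iff_norm]⟩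
    have h12 : |⟪Fp u, u⟫| ≤ ‖Fq u - Fp u‖ := by
      have he : ⟪Fp u, u⟫ = ⟪Fp u - Fq u, u⟫ := by rw [inner_sub_left, h9, sub_zero]
      rw [he]
      calc |⟪Fp u - Fq u, u⟫| ≤ ‖Fp u - Fq u‖ * ‖u‖ := abs_real_inner_le_norm _ _
        _ = ‖Fq u - Fp u‖ := by rw [hun, mul_one, norm_sub_rev]
    have h13 : Metric.infDist (Fp u) Cd ≤ ‖Fq u - Fp u‖ := by
      calc Metric.infDist (Fp u) Cd ≤ Metric.infDist (Fq u) Cd + dist (Fp u) (Fq u) :=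
            Metric.infDist_le_infDist_add_dist
        _ = ‖Fq u - Fp u‖ := by
            rw [Metric.infDist_zero_of_mem h10, zero_add, dist_eq_norm, norm_sub_rev]
    have h14 := hdiff u hun
    have h15 : g u ≤ 2 * ‖Fq u - Fp u‖ := by
      rw [hg]; simp only; linarith
    linarith
end
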